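/- Let C be a small k-linear category with an action of a group G, and set D = C # kG (the smash product category). Then D is a G-graded k-linear category, with D^g(x,y) = C(x,y) ⊗ kg, and moreover D is strongly graded; consequently the extension C ⊆ D is kG-Galois. -/

import Mathlib

/-!
STATEMENT 10: Let `C` be a small `k`-linear category with an action of a group
`G` and let `D = C # kG` be the smash product category: `D` has the same
objects as `C`, its hom-spaces decompose as `⊕_{g ∈ G} C(x,y) ⊗ kg`, and
composition of homogeneous elements is `(f # s)(g # t) = (f ∘ (s·g)) # st`.
Then this decomposition makes `D` a strongly `G`-graded category, and
consequently the extension `C = D^1 ⊆ D` is `kG`-Galois.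

The smash product is axiomatized: `D` is a `k`-linear category with the same
objects as `C` (via `e`), a `G`-indexed family of submodules `deg` of its
hom-spaces forming an internal direct sum compatible with composition, and
`k`-linear identifications `φ s : C(x,y) ≅ D^s(e x, e y)` under which
composition is the smash composition.
-/

open CategoryTheory DirectSum TensorProduct

section

variable {k : Type} [Field k] {G : Type} [Group G] [DecidableEq G]
variable {D : Type} [Category D] [Preadditive D] [CategoryTheory.Linear k D] [DecidableEq D]

/-- `Σ_y D^s(z,y)·D^t(y,x)`. -/
def gradedSpan (deg : ∀ x y : D, G → Submodule k (x ⟶ y)) (s t : G) (x z : D) :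
    Submodule k (x ⟶ z) :=
  Submodule.span k {h | ∃ (y : D) (g : x ⟶ y) (f : y ⟶ z),
    g ∈ deg x y t ∧ f ∈ deg y z s ∧ h = g ≫ f}

/-- Relations defining `D ⊗_C D` over `C = D^1`. -/
noncomputable def tensorRel (deg : ∀ x y : D, G → Submodule k (x ⟶ y)) (x z : D) :
    Submodule k (⨁ y : D, ((y ⟶ z) ⊗[k] (x ⟶ y))) :=
  Submodule.span k {a | ∃ (y y' : D) (f : y ⟶ y') (_ : f ∈ deg y y' 1)
      (m : y' ⟶ z) (n : x ⟶ y),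
    a = DirectSum.of (fun y : D => ((y ⟶ z) ⊗[k] (x ⟶ y))) y ((f ≫ m) ⊗ₜ[k] n)
      - DirectSum.of (fun y : D => ((y ⟶ z) ⊗[k] (x ⟶ y))) y' (m ⊗ₜ[k] (n ≫ f))}

/-- The component at `(x, z)` of the `C`-bimodule `D ⊗_C D`, `C = D^1`. -/
abbrev TensorCD (deg : ∀ x y : D, G → Submodule k (x ⟶ y)) (x z : D) :=
  (⨁ y : D, ((y ⟶ z) ⊗[k] (x ⟶ y))) ⧸ tensorRel deg x z

end

/-!
Everything follows from one fact about `C # kG`: for each object `x` and `s ∈ G` there is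
`u ∈ D^s(x,x)` with a right inverse `v ∈ D^{s⁻¹}(x,x)`, namely `u = 1 # s`, `v = 1 # s⁻¹`.
Then any `h ∈ D^{st}(x,z)` factors as `u_t ≫ (v_t ≫ h)` with `v_t ≫ h ∈ D^s`, which is strong
grading. The canonical map `f ⊗ g ↦ Σ_s g_s f ⊗ s` has the inverse `h ⊗ s ↦ v_s h ⊗ u_s`: for
homogeneous `g` of degree `s`, the relations of `D ⊗_C D` move the degree-one factor `v_s ≫ g`
across the tensor sign, turning `(v_s ≫ g ≫ f) ⊗ u_s` back into `f ⊗ g`.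
-/

section GradedCategory

variable {k : Type} [CommRing k] {G : Type} [DecidableEq G]
variable {D : Type} [Category D] [Preadditive D] [Linear k D]
variable (deg : ∀ x y : D, G → Submodule k (x ⟶ y))

theorem homogeneous_induction (hint : ∀ x y : D, IsInternal (deg x y)) {x y : D}
    {p : (x ⟶ y) → Prop} (n : x ⟶ y) (hom : ∀ s, ∀ g ∈ deg x y s, p g) (zero : p 0)
    (add : ∀ a b, p a → p b → p (a + b)) : p n :=
  Submodule.iSup_induction (motive := p) _
    ((hint x y).submodule_iSup_eq_top ▸ Submodule.mem_top) hom zero add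

variable (hint : ∀ x y : D, IsInternal (deg x y))

noncomputable def homogeneousParts (x y : D) : (x ⟶ y) →ₗ[k] ⨁ _ : G, (x ⟶ y) :=
  lmap (fun s => (deg x y s).subtype) ∘ₗ
    (LinearEquiv.ofBijective (coeLinearMap (deg x y)) (hint x y)).symm.toLinearMap

theorem homogeneousParts_of_mem {x y : D} {s : G} {g : x ⟶ y} (hg : g ∈ deg x y s) :
    homogeneousParts deg hint x y g = lof k G (fun _ => x ⟶ y) s g := by
  have : (LinearEquiv.ofBijective (coeLinearMap (deg x y)) (hint x y)).symm g =
      lof k G (fun s => deg x y s) s ⟨g, hg⟩ := by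
    rw [LinearEquiv.symm_apply_eq]
    exact (coeLinearMap_of (deg x y) s ⟨g, hg⟩).symm
  rw [homogeneousParts, LinearMap.comp_apply, LinearEquiv.coe_coe, this, lmap_lof]
  rfl

variable [DecidableEq D]

/-- `f ⊗ g ↦ Σ_s g_s f ⊗ s`, where `⨁ _ : G, (x ⟶ z)` stands for `D(x,z) ⊗ kG`; it descends
to the Galois map on the quotient `D ⊗_C D`. -/
noncomputable def canonicalMap (x z : D) :
    (⨁ y : D, ((y ⟶ z) ⊗[k] (x ⟶ y))) →ₗ[k] ⨁ _ : G, (x ⟶ z) :=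
  toModule k D _ fun y =>
    lmap (fun _ => TensorProduct.lift (Linear.comp (S := k) x y z).flip) ∘ₗ
      (TensorProduct.directSumRight k k (y ⟶ z) (fun _ : G => x ⟶ y)).toLinearMap ∘ₗ
      TensorProduct.map LinearMap.id (homogeneousParts deg hint x y)

theorem canonicalMap_of_tmul {x y z : D} (f : y ⟶ z) {s : G} {g : x ⟶ y} (hg : g ∈ deg x y s) :
    canonicalMap deg hint x z (of (fun y : D => ((y ⟶ z) ⊗[k] (x ⟶ y))) y (f ⊗ₜ[k] g)) =
      of (fun _ : G => x ⟶ z) s (g ≫ f) := by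
  rw [← lof_eq_of k, canonicalMap, toModule_lof]
  simp only [LinearMap.comp_apply, LinearEquiv.coe_coe, TensorProduct.map_tmul,
    LinearMap.id_apply]
  rw [homogeneousParts_of_mem deg hint hg, directSumRight_tmul_lof, lmap_lof,
    TensorProduct.lift.tmul, LinearMap.flip_apply, Linear.comp_apply, Linear.leftComp_apply,
    lof_eq_of]

variable [Monoid G]

def IsGradedComp : Prop :=
  ∀ {x y z : D} {s t : G} (g : x ⟶ y) (f : y ⟶ z),
    g ∈ deg x y t → f ∈ deg y z s → g ≫ f ∈ deg x z (s * t)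

theorem canonicalMap_balanced (hcomp : IsGradedComp deg) {x y y' z : D} {c : y ⟶ y'}
    (hc : c ∈ deg y y' 1) (m : y' ⟶ z) (n : x ⟶ y) :
    canonicalMap deg hint x z (of (fun y : D => ((y ⟶ z) ⊗[k] (x ⟶ y))) y ((c ≫ m) ⊗ₜ[k] n)) =
      canonicalMap deg hint x z
        (of (fun y : D => ((y ⟶ z) ⊗[k] (x ⟶ y))) y' (m ⊗ₜ[k] (n ≫ c))) := by
  induction n using homogeneous_induction deg hint with
  | hom s g hg =>
    have hgc : g ≫ c ∈ deg x y' s := by simpa using hcomp g c hg hc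
    rw [canonicalMap_of_tmul deg hint _ hg, canonicalMap_of_tmul deg hint _ hgc, Category.assoc]
  | zero => simp
  | add a b ha hb => simp only [Preadditive.add_comp, TensorProduct.tmul_add, map_add, ha, hb]

end GradedCategory

section SmashProduct

variable {k : Type} [Field k] {G : Type} [Group G]
variable {D : Type} [Category D] [Preadditive D] [Linear k D]
variable (deg : ∀ x y : D, G → Submodule k (x ⟶ y))

theorem gradedSpan_eq_of_splitting (hcomp : IsGradedComp deg)
    (hsplit : ∀ (x : D) (s : G), ∃ u ∈ deg x x s, ∃ v ∈ deg x x s⁻¹, u ≫ v = 𝟙 x)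
    (s t : G) (x z : D) : gradedSpan deg s t x z = deg x z (s * t) := by
  refine le_antisymm (Submodule.span_le.2 ?_) fun h hh => ?_
  · rintro _ ⟨y, g, f, hg, hf, rfl⟩
    exact hcomp g f hg hf
  · obtain ⟨u, hu, v, hv, huv⟩ := hsplit x t
    have hvh : v ≫ h ∈ deg x z s := by simpa using hcomp v h hv hh
    refine Submodule.subset_span ⟨x, u, v ≫ h, hu, hvh, ?_⟩
    rw [← Category.assoc, huv, Category.id_comp]

variable [DecidableEq D]

theorem tensorCD_mk_balanced {x y y' z : D} {c : y ⟶ y'} (hc : c ∈ deg y y' 1) (m : y' ⟶ z)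
    (n : x ⟶ y) :
    (Submodule.Quotient.mk (of (fun y : D => ((y ⟶ z) ⊗[k] (x ⟶ y))) y ((c ≫ m) ⊗ₜ[k] n)) :
      TensorCD deg x z) =
      Submodule.Quotient.mk (of (fun y : D => ((y ⟶ z) ⊗[k] (x ⟶ y))) y' (m ⊗ₜ[k] (n ≫ c))) :=
  (Submodule.Quotient.eq _).2 (Submodule.subset_span ⟨y, y', c, hc, m, n, rfl⟩)

variable [DecidableEq G]

/-- `h ⊗ s ↦ (v x s ≫ h) ⊗ u x s`; when `u x s ∈ D^s(x,x)` has the right inverse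
`v x s ∈ D^{s⁻¹}(x,x)`, this inverts the Galois map. -/
noncomputable def galoisInv (u v : ∀ x : D, G → (x ⟶ x)) (x z : D) :
    (⨁ _ : G, (x ⟶ z)) →ₗ[k] TensorCD deg x z :=
  toModule k G _ fun s =>
    (tensorRel deg x z).mkQ ∘ₗ lof k D (fun y : D => ((y ⟶ z) ⊗[k] (x ⟶ y))) x ∘ₗ
      (TensorProduct.mk k (x ⟶ z) (x ⟶ x)).flip (u x s) ∘ₗ Linear.leftComp k z (v x s)

theorem galoisInv_lof (u v : ∀ x : D, G → (x ⟶ x)) {x z : D} (s : G) (h : x ⟶ z) :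
    galoisInv deg u v x z (lof k G (fun _ => x ⟶ z) s h) =
      Submodule.Quotient.mk
        (of (fun y : D => ((y ⟶ z) ⊗[k] (x ⟶ y))) x ((v x s ≫ h) ⊗ₜ[k] u x s)) := by
  rw [galoisInv, toModule_lof]
  rfl

section GaloisMap

variable (hint : ∀ x y : D, IsInternal (deg x y))

theorem tensorRel_le_ker_canonicalMap (hcomp : IsGradedComp deg) (x z : D) :
    tensorRel deg x z ≤ LinearMap.ker (canonicalMap deg hint x z) := by
  refine Submodule.span_le.2 ?_
  rintro _ ⟨y, y', c, hc, m, n, rfl⟩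
  rw [SetLike.mem_coe, LinearMap.mem_ker, map_sub, sub_eq_zero]
  exact canonicalMap_balanced deg hint hcomp hc m n

variable (hcomp : IsGradedComp deg)

noncomputable def galoisMap (x z : D) : TensorCD deg x z →ₗ[k] ⨁ _ : G, (x ⟶ z) :=
  (tensorRel deg x z).liftQ _ (tensorRel_le_ker_canonicalMap deg hint hcomp x z)

theorem galoisMap_comp_galoisInv (u v : ∀ x : D, G → (x ⟶ x))
    (hu : ∀ x s, u x s ∈ deg x x s) (huv : ∀ x s, u x s ≫ v x s = 𝟙 x) (x z : D) :
    galoisMap deg hint hcomp x z ∘ₗ galoisInv deg u v x z = LinearMap.id := by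
  refine linearMap_ext k fun s => LinearMap.ext fun h => ?_
  simp only [LinearMap.comp_apply, LinearMap.id_apply, galoisMap]
  rw [galoisInv_lof, Submodule.liftQ_apply, canonicalMap_of_tmul deg hint _ (hu x s),
    ← Category.assoc, huv, Category.id_comp, lof_eq_of]

theorem galoisInv_comp_galoisMap (u v : ∀ x : D, G → (x ⟶ x))
    (hv : ∀ x s, v x s ∈ deg x x s⁻¹) (huv : ∀ x s, u x s ≫ v x s = 𝟙 x) (x z : D) :
    galoisInv deg u v x z ∘ₗ galoisMap deg hint hcomp x z = LinearMap.id := by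
  refine Submodule.linearMap_qext _ (linearMap_ext k fun y => TensorProduct.ext' fun f n => ?_)
  simp only [LinearMap.comp_apply, galoisMap, Submodule.mkQ_apply, Submodule.liftQ_apply,
    LinearMap.id_apply]
  induction n using homogeneous_induction deg hint with
  | hom s g hg =>
    have hvg : v x s ≫ g ∈ deg x y 1 := by simpa using hcomp (v x s) g (hv x s) hg
    rw [lof_eq_of, canonicalMap_of_tmul deg hint f hg, ← lof_eq_of k, galoisInv_lof,
      ← Category.assoc, tensorCD_mk_balanced deg hvg, ← Category.assoc, huv, Category.id_comp]
  | zero => simp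
  | add a b ha hb =>
    simp only [TensorProduct.tmul_add, map_add, ha, hb, Submodule.Quotient.mk_add]

end GaloisMap

theorem exists_galoisEquiv (hint : ∀ x y : D, IsInternal (deg x y)) (hcomp : IsGradedComp deg)
    (hsplit : ∀ (x : D) (s : G), ∃ u ∈ deg x x s, ∃ v ∈ deg x x s⁻¹, u ≫ v = 𝟙 x) :
    ∃ β : ∀ x z : D, TensorCD deg x z ≃ₗ[k] (⨁ _ : G, (x ⟶ z)),
      ∀ (x z y : D) (f : y ⟶ z) (s : G) (g : x ⟶ y), g ∈ deg x y s →
        β x z (Submodule.Quotient.mk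
            (of (fun y : D => ((y ⟶ z) ⊗[k] (x ⟶ y))) y (f ⊗ₜ[k] g))) =
        of (fun _ : G => (x ⟶ z)) s (g ≫ f) := by
  choose u hu v hv huv using hsplit
  refine ⟨fun x z => LinearEquiv.ofLinearMap (galoisMap deg hint hcomp x z)
    (galoisInv deg u v x z) (galoisMap_comp_galoisInv deg hint hcomp u v hu huv x z)
    (galoisInv_comp_galoisMap deg hint hcomp u v hv huv x z), fun x z y f s g hg => ?_⟩
  exact canonicalMap_of_tmul deg hint f hg

end SmashProduct

section

variable {k : Type} [Field k] {G : Type} [Group G] [DecidableEq G]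
variable {D : Type} [Category D] [Preadditive D] [CategoryTheory.Linear k D] [DecidableEq D]

theorem stmt_10_general {C : Type} [Category C] [Preadditive C] [CategoryTheory.Linear k C]
    -- the `G`-action on `C`, fixing objects (each hom-space is a `G`-module)
    (act : ∀ (s : G) (x y : C), (x ⟶ y) →ₗ[k] (x ⟶ y))
    (act_id : ∀ (s : G) (x : C), act s x x (𝟙 x) = 𝟙 x)
    -- `D` is the smash product `C # kG`:
    (e : C ≃ D)                                      -- same objects
    (deg : ∀ x y : D, G → Submodule k (x ⟶ y))       -- the grading
    (hinternal : ∀ x y : D, DirectSum.IsInternal (deg x y))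
    (hcomp : ∀ {x y z : D} {s t : G} (g : x ⟶ y) (f : y ⟶ z),
      g ∈ deg x y t → f ∈ deg y z s → g ≫ f ∈ deg x z (s * t))
    -- `D^s(e x, e y) ≅ C(x,y) ⊗ k·s`
    (φ : ∀ (s : G) (x y : C), (x ⟶ y) ≃ₗ[k] deg (e x) (e y) s)
    -- homogeneous composition in `D` is the smash composition
    (hφ : ∀ (s t : G) {x y z : C} (g : x ⟶ y) (f : y ⟶ z),
      ((φ t x y g : deg (e x) (e y) t) : (e x ⟶ e y)) ≫
        ((φ s y z f : deg (e y) (e z) s) : (e y ⟶ e z)) =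
      ((φ (s * t) x z (act s x y g ≫ f) : deg (e x) (e z) (s * t)) : (e x ⟶ e z)))
    (hφ_id : ∀ x : C, ((φ 1 x x (𝟙 x) : deg (e x) (e x) 1) : (e x ⟶ e x)) = 𝟙 (e x)) :
    -- `D` is strongly graded ...
    (∀ (s t : G) (x z : D), gradedSpan deg s t x z = deg x z (s * t)) ∧
    -- ... and `C = D^1 ⊆ D` is `kG`-Galois
    ∃ β : ∀ x z : D, TensorCD deg x z ≃ₗ[k] (⨁ _ : G, (x ⟶ z)),
      ∀ (x z y : D) (f : y ⟶ z) (s : G) (g : x ⟶ y), g ∈ deg x y s →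
        β x z (Submodule.Quotient.mk
            (DirectSum.of (fun y : D => ((y ⟶ z) ⊗[k] (x ⟶ y))) y (f ⊗ₜ[k] g))) =
        DirectSum.of (fun _ : G => (x ⟶ z)) s (g ≫ f) := by
  -- `1 # s` has the right inverse `1 # s⁻¹`
  have hsplit : ∀ (x : D) (s : G), ∃ u ∈ deg x x s, ∃ v ∈ deg x x s⁻¹, u ≫ v = 𝟙 x := by
    intro x s
    obtain ⟨x, rfl⟩ := e.surjective x
    refine ⟨_, (φ s x x (𝟙 x)).2, _, (φ s⁻¹ x x (𝟙 x)).2, ?_⟩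
    rw [hφ, act_id, Category.id_comp, inv_mul_cancel, hφ_id]
  exact ⟨gradedSpan_eq_of_splitting deg @hcomp hsplit,
    exists_galoisEquiv deg hinternal @hcomp hsplit⟩

theorem stmt_10 {C : Type} [Category C] [Preadditive C] [CategoryTheory.Linear k C]
    -- the `G`-action on `C`, fixing objects (each hom-space is a `G`-module)
    (act : ∀ (s : G) (x y : C), (x ⟶ y) →ₗ[k] (x ⟶ y))
    (act_one : ∀ (x y : C) (f : x ⟶ y), act 1 x y f = f)
    (act_mul : ∀ (s t : G) (x y : C) (f : x ⟶ y),
      act (s * t) x y f = act s x y (act t x y f))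
    (act_id : ∀ (s : G) (x : C), act s x x (𝟙 x) = 𝟙 x)
    (act_comp : ∀ (s : G) {x y z : C} (g : x ⟶ y) (f : y ⟶ z),
      act s x z (g ≫ f) = act s x y g ≫ act s y z f)
    -- `D` is the smash product `C # kG`:
    (e : C ≃ D)                                      -- same objects
    (deg : ∀ x y : D, G → Submodule k (x ⟶ y))       -- the grading
    (hinternal : ∀ x y : D, DirectSum.IsInternal (deg x y))
    (hcomp : ∀ {x y z : D} {s t : G} (g : x ⟶ y) (f : y ⟶ z),
      g ∈ deg x y t → f ∈ deg y z s → g ≫ f ∈ deg x z (s * t))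
    (hid : ∀ x : D, 𝟙 x ∈ deg x x 1)
    -- `D^s(e x, e y) ≅ C(x,y) ⊗ k·s`
    (φ : ∀ (s : G) (x y : C), (x ⟶ y) ≃ₗ[k] deg (e x) (e y) s)
    -- homogeneous composition in `D` is the smash composition
    (hφ : ∀ (s t : G) {x y z : C} (g : x ⟶ y) (f : y ⟶ z),
      ((φ t x y g : deg (e x) (e y) t) : (e x ⟶ e y)) ≫
        ((φ s y z f : deg (e y) (e z) s) : (e y ⟶ e z)) =
      ((φ (s * t) x z (act s x y g ≫ f) : deg (e x) (e z) (s * t)) : (e x ⟶ e z)))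
    (hφ_id : ∀ x : C, ((φ 1 x x (𝟙 x) : deg (e x) (e x) 1) : (e x ⟶ e x)) = 𝟙 (e x)) :
    -- `D` is strongly graded ...
    (∀ (s t : G) (x z : D), gradedSpan deg s t x z = deg x z (s * t)) ∧
    -- ... and `C = D^1 ⊆ D` is `kG`-Galois
    ∃ β : ∀ x z : D, TensorCD deg x z ≃ₗ[k] (⨁ _ : G, (x ⟶ z)),
      ∀ (x z y : D) (f : y ⟶ z) (s : G) (g : x ⟶ y), g ∈ deg x y s →
        β x z (Submodule.Quotient.mk
            (DirectSum.of (fun y : D => ((y ⟶ z) ⊗[k] (x ⟶ y))) y (f ⊗ₜ[k] g))) =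
        DirectSum.of (fun _ : G => (x ⟶ z)) s (g ≫ f) :=
  stmt_10_general act act_id e deg hinternal hcomp φ hφ hφ_id

end
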